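/- The bounded linear operator Φ : 𝒱 × 𝒬 → 𝒱' × 𝒬' defined by Φ(u,p) = (Au + B*p, Bu) is bijective (an isomorphism of Banach spaces). In particular, if û ∈ 𝒱 and p̂ ∈ 𝒬 satisfy Aû + B*p̂ = 0 and Bû = 0, then û = 0 and p̂ = 0. -/

import Mathlib

open MeasureTheory Real Set
open scoped ENNReal

noncomputable section

variable {V Q : Type*}
  [NormedAddCommGroup V] [InnerProductSpace ℝ V] [CompleteSpace V]
  [NormedAddCommGroup Q] [InnerProductSpace ℝ Q] [CompleteSpace Q]

/-!
Uniqueness: testing `a u + B* p = 0` against `u ∈ ker B` gives `a(u,u) = 0`, so `u = 0` by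
coercivity on the kernel, and then `B* p = 0` forces `p = 0` by the inf-sup condition.

Existence: with `R : 𝒬 → 𝒱` the Riesz representative of `B*`, the form `(q, q') ↦ b(Rq, q')`
on `𝒬` is coercive with constant `β²`, so by Lax–Milgram `B ∘ R` is onto `𝒬'`; this lifts
`g` to some `w` with `Bw = g`, and also shows that a functional vanishing on `ker B` lies in the
range of `B*`. Lax–Milgram for `a` on `ker B` corrects `w` to `u` with `f - Au` vanishing on
`ker B`, and the latter fact provides `p`.
-/

open InnerProductSpace
open scoped InnerProductSpace

theorem IsCoercive.bijective {E : Type*} [NormedAddCommGroup E] [InnerProductSpace ℝ E]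
    [CompleteSpace E] {B : E →L[ℝ] E →L[ℝ] ℝ} (hB : IsCoercive B) : Function.Bijective B := by
  have hB_eq : ⇑B = toDual ℝ E ∘ hB.continuousLinearEquivOfBilin := by
    ext v w
    simp [toDual_apply_apply]
  rw [hB_eq]
  exact (toDual ℝ E).bijective.comp hB.continuousLinearEquivOfBilin.bijective

theorem isCoercive_bilinearComp_subtypeL {E : Type*} [NormedAddCommGroup E] [NormedSpace ℝ E]
    {a : E →L[ℝ] E →L[ℝ] ℝ} {K : Submodule ℝ E} {α : ℝ} (hα : 0 < α)
    (hcoer : ∀ v ∈ K, α * ‖v‖ ^ 2 ≤ a v v) :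
    IsCoercive (a.bilinearComp K.subtypeL K.subtypeL) :=
  ⟨α, hα, fun v => by simpa [sq, mul_assoc] using hcoer v v.2⟩

theorem eq_zero_of_add_flip_eq_zero {E F : Type*} [NormedAddCommGroup E] [NormedSpace ℝ E]
    [NormedAddCommGroup F] [NormedSpace ℝ F]
    {a : E →L[ℝ] E →L[ℝ] ℝ} {b : E →L[ℝ] F →L[ℝ] ℝ} {α β : ℝ} (hα : 0 < α) (hβ : 0 < β)
    (hcoer : ∀ v, b v = 0 → α * ‖v‖ ^ 2 ≤ a v v) (hinfsup : ∀ q, β * ‖q‖ ≤ ‖b.flip q‖)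
    {u : E} {p : F} (h₁ : a u + b.flip p = 0) (h₂ : b u = 0) : u = 0 ∧ p = 0 := by
  have hauu : a u u = 0 := by
    simpa [h₂] using congrArg (fun ℓ : E →L[ℝ] ℝ => ℓ u) h₁
  have hu : u = 0 := by
    have := hcoer u h₂
    rw [hauu] at this
    exact norm_eq_zero.mp ((sq_nonpos_iff _).mp (nonpos_of_mul_nonpos_right this hα))
  rw [hu, map_zero, zero_add] at h₁
  have := hinfsup p
  rw [h₁, norm_zero] at this
  exact ⟨hu, norm_le_zero_iff.mp (nonpos_of_mul_nonpos_right this hβ)⟩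

section RieszAdjoint

variable {E F : Type*} [NormedAddCommGroup E] [InnerProductSpace ℝ E] [CompleteSpace E]
  [NormedAddCommGroup F] [NormedSpace ℝ F]

def rieszAdjoint (b : E →L[ℝ] F →L[ℝ] ℝ) : F →L[ℝ] E :=
  (toDual ℝ E).symm.toContinuousLinearEquiv.toContinuousLinearMap ∘L b.flip

theorem inner_rieszAdjoint_left (b : E →L[ℝ] F →L[ℝ] ℝ) (q : F) (v : E) :
    ⟪rieszAdjoint b q, v⟫_ℝ = b v q := by
  simp [rieszAdjoint]

theorem toDual_rieszAdjoint (b : E →L[ℝ] F →L[ℝ] ℝ) (q : F) :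
    toDual ℝ E (rieszAdjoint b q) = b.flip q := by
  simp [rieszAdjoint]

theorem isCoercive_comp_rieszAdjoint {b : E →L[ℝ] F →L[ℝ] ℝ} {β : ℝ} (hβ : 0 < β)
    (hinfsup : ∀ q, β * ‖q‖ ≤ ‖b.flip q‖) :
    IsCoercive (b ∘L rieszAdjoint b) := by
  refine ⟨β ^ 2, by positivity, fun q => ?_⟩
  have hnorm : ‖rieszAdjoint b q‖ = ‖b.flip q‖ := by
    rw [← toDual_rieszAdjoint, LinearIsometryEquiv.norm_map]
  calc β ^ 2 * ‖q‖ * ‖q‖ = (β * ‖q‖) ^ 2 := by ring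
    _ ≤ ‖b.flip q‖ ^ 2 := pow_le_pow_left₀ (by positivity) (hinfsup q) 2
    _ = (b ∘L rieszAdjoint b) q q := by
      rw [← hnorm, ← real_inner_self_eq_norm_sq, inner_rieszAdjoint_left]; rfl

end RieszAdjoint

section InfSup

variable {E F : Type*} [NormedAddCommGroup E] [InnerProductSpace ℝ E] [CompleteSpace E]
  [NormedAddCommGroup F] [InnerProductSpace ℝ F] [CompleteSpace F]
  {b : E →L[ℝ] F →L[ℝ] ℝ} {β : ℝ}

theorem surjective_comp_rieszAdjoint (hβ : 0 < β) (hinfsup : ∀ q, β * ‖q‖ ≤ ‖b.flip q‖) :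
    Function.Surjective (b ∘ rieszAdjoint b) :=
  (isCoercive_comp_rieszAdjoint hβ hinfsup).bijective.2

theorem exists_flip_eq_of_ker_le (hβ : 0 < β) (hinfsup : ∀ q, β * ‖q‖ ≤ ‖b.flip q‖)
    {ℓ : E →L[ℝ] ℝ} (hℓ : ∀ v, b v = 0 → ℓ v = 0) : ∃ p, b.flip p = ℓ := by
  set r := (toDual ℝ E).symm ℓ
  obtain ⟨p, hp⟩ := surjective_comp_rieszAdjoint hβ hinfsup (b r)
  -- `d` lies in `ker B` and is orthogonal to it, as both `R p` and `r` are.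
  set d := rieszAdjoint b p - r
  have hd : b d = 0 := by simpa [d, sub_eq_zero] using hp
  have hdd : ⟪d, d⟫_ℝ = 0 :=
    calc ⟪d, d⟫_ℝ = ⟪rieszAdjoint b p, d⟫_ℝ - ⟪r, d⟫_ℝ := inner_sub_left _ _ _
      _ = b d p - ℓ d := by rw [inner_rieszAdjoint_left, toDual_symm_apply]
      _ = 0 := by rw [hd, hℓ d hd, zero_apply, sub_zero]
  refine ⟨p, ?_⟩
  rw [← toDual_rieszAdjoint, sub_eq_zero.mp (inner_self_eq_zero.mp hdd),
    LinearIsometryEquiv.apply_symm_apply]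

theorem exists_add_flip_eq_and_eq {a : E →L[ℝ] E →L[ℝ] ℝ} {α : ℝ} (hα : 0 < α)
    (hcoer : ∀ v, b v = 0 → α * ‖v‖ ^ 2 ≤ a v v) (hβ : 0 < β)
    (hinfsup : ∀ q, β * ‖q‖ ≤ ‖b.flip q‖) (f : E →L[ℝ] ℝ) (g : F →L[ℝ] ℝ) :
    ∃ u p, a u + b.flip p = f ∧ b u = g := by
  obtain ⟨q, hq⟩ := surjective_comp_rieszAdjoint hβ hinfsup g
  set w := rieszAdjoint b q
  set K := b.ker
  have : CompleteSpace K := b.isClosed_ker.completeSpace_coe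
  obtain ⟨u₀, hu₀⟩ :=
    (isCoercive_bilinearComp_subtypeL (K := K) hα hcoer).bijective.2 ((f - a w) ∘L K.subtypeL)
  have hres : ∀ v ∈ K, (f - a (u₀ + w)) v = 0 := fun v hv => by
    have := congrArg (fun ℓ : K →L[ℝ] ℝ => ℓ ⟨v, hv⟩) hu₀
    simp only [ContinuousLinearMap.bilinearComp_apply, Submodule.subtypeL_apply,
      ContinuousLinearMap.comp_apply, sub_apply] at this
    simp only [sub_apply, map_add, add_apply, this]
    ring
  obtain ⟨p, hp⟩ := exists_flip_eq_of_ker_le hβ hinfsup hres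
  refine ⟨u₀ + w, p, by rw [hp]; abel, ?_⟩
  simpa [show b u₀ = 0 from u₀.2] using hq

end InfSup

theorem brezzi_operator_bijective
    (a : V →L[ℝ] V →L[ℝ] ℝ) (b : V →L[ℝ] Q →L[ℝ] ℝ)
    (α₀ : ℝ) (hα₀ : 0 < α₀)
    (hcoer : ∀ v : V, b v = 0 → α₀ * ‖v‖ ^ 2 ≤ a v v)
    (β : ℝ) (hβ : 0 < β)
    (hinfsup : ∀ q : Q, β * ‖q‖ ≤ ‖b.flip q‖)
    :
    Function.Bijective
      (⇑(((a.comp (ContinuousLinearMap.fst ℝ V Q)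
          + b.flip.comp (ContinuousLinearMap.snd ℝ V Q)).prod
            (b.comp (ContinuousLinearMap.fst ℝ V Q))) :
        V × Q →L[ℝ] (V →L[ℝ] ℝ) × (Q →L[ℝ] ℝ)))
    ∧ ∀ (uhat : V) (phat : Q), a uhat + b.flip phat = 0 → b uhat = 0 → uhat = 0 ∧ phat = 0 := by
  have hker : ∀ (u : V) (p : Q), a u + b.flip p = 0 → b u = 0 → u = 0 ∧ p = 0 :=
    fun _ _ => eq_zero_of_add_flip_eq_zero hα₀ hβ hcoer hinfsup
  refine ⟨⟨(injective_iff_map_eq_zero _).2 fun ⟨u, p⟩ h => ?_, fun ⟨f, g⟩ => ?_⟩, hker⟩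
  · simp only [ContinuousLinearMap.prod_apply, add_apply, ContinuousLinearMap.coe_comp,
      Function.comp_apply, ContinuousLinearMap.coe_fst', ContinuousLinearMap.coe_snd',
      Prod.mk_eq_zero] at h
    simpa using hker u p h.1 h.2
  · obtain ⟨u, p, hf, hg⟩ := exists_add_flip_eq_and_eq hα₀ hcoer hβ hinfsup f g
    exact ⟨(u, p), by simp [hf, hg]⟩
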